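/- Let u be a positive harmonic function on the open unit disc 𝔻 that extends continuously to the closed disc minus {1}, with u = 0 on an open arc A of the unit circle containing 1 (except possibly at 1 itself), and suppose u is bounded in some neighborhood of 1 intersected with 𝔻. Then u(t) → 0 as t → 1 with t ∈ 𝔻. -/

import Mathlib

/-!
Subtracting the harmonic function `C (1 - Re z)`, which dominates `u` on the unit circle and
vanishes at `1`, reduces the claim to an extended maximum principle: a harmonic function on a
bounded domain that is nonpositive on the boundary except at one point `p`, near which it is
bounded above, is nonpositive. This follows from the ordinary maximum principle on the domain
with a small disc around `p` removed, applied to `v - η log (R / |z - p|)`, by letting `η → 0`.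
The ordinary maximum principle holds because a harmonic function is locally the real part of a
holomorphic `F`, and the maximum modulus principle for `exp F` makes it locally constant near a
local maximum.
-/

open Complex Metric Filter

/-- `u` is harmonic on `s`: twice continuously differentiable (over `ℝ`) and
satisfies Laplace's equation on `s`. -/
def HarmonicOnSet (u : ℂ → ℝ) (s : Set ℂ) : Prop :=
  ContDiffOn ℝ 2 u s ∧ ∀ z ∈ s,
    iteratedFDeriv ℝ 2 u z ![1, 1] + iteratedFDeriv ℝ 2 u z ![Complex.I, Complex.I] = 0

open InnerProductSpace Set Topology Bornology

theorem HarmonicOnSet.harmonicOnNhd {u : ℂ → ℝ} {s : Set ℂ} (hu : HarmonicOnSet u s)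
    (hs : IsOpen s) : HarmonicOnNhd u s := fun z hz =>
  ⟨hu.1.contDiffAt (hs.mem_nhds hz), by
    filter_upwards [hs.mem_nhds hz] with w hw
    rw [laplacian_eq_iteratedFDeriv_complexPlane]
    exact hu.2 w hw⟩

theorem InnerProductSpace.HarmonicAt.eventually_eq_of_isLocalMax {f : ℂ → ℝ} {x : ℂ}
    (hf : HarmonicAt f x) (hmax : IsLocalMax f x) : ∀ᶠ y in 𝓝 x, f y = f x := by
  obtain ⟨r, hr, hball⟩ := Metric.isOpen_iff.1 (isOpen_setOfPred_harmonicAt f) x hf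
  obtain ⟨F, hFa, hFre⟩ := HarmonicOnNhd.exists_analyticOnNhd_ball_re_eq hball
  have hnorm : ∀ y ∈ ball x r, ‖exp (F y)‖ = Real.exp (f y) := fun y hy => by
    rw [norm_exp]
    exact congrArg Real.exp (hFre hy)
  have hconst : ∀ᶠ y in 𝓝 x, exp (F y) = exp (F x) := by
    refine Complex.eventually_eq_of_isLocalMax_norm ?_ ?_
    · filter_upwards [ball_mem_nhds x hr] with y hy
      exact (hFa y hy).differentiableAt.cexp
    · filter_upwards [hmax, ball_mem_nhds x hr] with y hy hyr
      simp only [Function.comp_apply, hnorm y hyr, hnorm x (mem_ball_self hr)]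
      exact Real.exp_le_exp.2 hy
  filter_upwards [hconst, ball_mem_nhds x hr] with y hy hyr
  have := congrArg norm hy
  rwa [hnorm y hyr, hnorm x (mem_ball_self hr), Real.exp_eq_exp] at this

theorem InnerProductSpace.HarmonicContOnCl.le_of_forall_mem_frontier_le {f : ℂ → ℝ}
    {U : Set ℂ} (hf : HarmonicContOnCl f U) (hU : IsBounded U) {c : ℝ}
    (hc : ∀ z ∈ frontier U, f z ≤ c) {z : ℂ} (hz : z ∈ U) : f z ≤ c := by
  have hK : IsCompact (closure U) := hU.isCompact_closure
  obtain ⟨w, hw, hwmax⟩ := hK.exists_isMaxOn ⟨z, subset_closure hz⟩ hf.continuousOn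
  set S := closure U ∩ f ⁻¹' {f w}
  have hS : IsCompact S := hK.of_isClosed_subset
    (hf.continuousOn.preimage_isClosed_of_isClosed isClosed_closure isClosed_singleton)
    inter_subset_left
  -- Among the maximum points, one with largest real part cannot be interior.
  obtain ⟨w₀, hw₀, hw₀max⟩ := hS.exists_isMaxOn ⟨w, hw, rfl⟩ continuous_re.continuousOn
  suffices w₀ ∈ frontier U from (hwmax (subset_closure hz)).trans (hw₀.2 ▸ hc w₀ this)
  by_contra hfr
  have hint : w₀ ∈ interior U := by
    rw [← closure_sdiff_frontier]
    exact ⟨hw₀.1, hfr⟩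
  have hloc : IsLocalMax f w₀ := by
    filter_upwards [isOpen_interior.mem_nhds hint] with y hy
    exact (hwmax (interior_subset_closure hy)).trans_eq hw₀.2.symm
  have hconst := (hf.harmonicOnNhd w₀ (interior_subset hint)).eventually_eq_of_isLocalMax hloc
  have htend : Tendsto (fun t : ℝ => w₀ + t) (𝓝[>] 0) (𝓝 w₀) := by
    have : Continuous (fun t : ℝ => w₀ + t) := by fun_prop
    simpa using (this.tendsto 0).mono_left nhdsWithin_le_nhds
  obtain ⟨t, ⟨hft, hmem⟩, ht⟩ := ((htend.eventually
    (hconst.and (isOpen_interior.mem_nhds hint))).and self_mem_nhdsWithin).exists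
  have := hw₀max ⟨interior_subset_closure hmem, hft.trans hw₀.2⟩
  simp only [mem_ofPred_eq, add_re, ofReal_re] at this ht
  linarith

theorem harmonicAt_log_dist {p x : ℂ} (hx : x ≠ p) :
    HarmonicAt (fun y => Real.log (dist y p)) x := by
  simpa only [dist_eq, id] using
    (analyticAt_id.fun_sub analyticAt_const).harmonicAt_log_norm (sub_ne_zero.2 hx)

theorem eventually_le_mul_sub_log_nhdsGT (K c : ℝ) {η : ℝ} (hη : 0 < η) :
    ∀ᶠ ρ in 𝓝[>] (0 : ℝ), K ≤ η * (c - Real.log ρ) := by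
  filter_upwards [Real.tendsto_log_nhdsGT_zero.eventually (eventually_le_atBot (c - K / η))]
    with ρ hρ
  rw [← div_le_iff₀' hη]
  linarith

theorem InnerProductSpace.HarmonicOnNhd.le_mul_log_sub_log_dist {v : ℂ → ℝ} {U : Set ℂ}
    {p : ℂ} (hv : HarmonicOnNhd v U) (hUo : IsOpen U) (hc : ContinuousOn v (closure U \ {p}))
    (hfr : ∀ x ∈ frontier U, x ≠ p → v x ≤ 0) {K R η : ℝ} (hK : ∀ᶠ x in 𝓝[U] p, v x ≤ K)
    (hR : closure U ⊆ closedBall p R) (hη : 0 < η) {z : ℂ} (hz : z ∈ U) (hzp : z ≠ p) :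
    v z ≤ η * (Real.log R - Real.log (dist z p)) := by
  set b : ℂ → ℝ := fun x => η * (Real.log R - Real.log (dist x p))
  obtain ⟨ρ₀, hρ₀, hρ₀K⟩ := Metric.eventually_nhds_iff.1 (eventually_nhdsWithin_iff.1 hK)
  have hzp' : 0 < dist z p := dist_pos.2 hzp
  have hb : ∀ x ∈ closure U, x ≠ p → 0 ≤ b x := fun x hx hxp =>
    mul_nonneg hη.le (sub_nonneg.2 (Real.log_le_log (dist_pos.2 hxp) (hR hx)))
  -- Cut out a disc around `p` so small that the barrier exceeds `K` on its boundary.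
  obtain ⟨ρ, ⟨hρK, hρ, hρρ₀⟩, -, hρz⟩ := ((eventually_le_mul_sub_log_nhdsGT K (Real.log R) hη).and
    (Ioo_mem_nhdsGT hρ₀)).and (Ioo_mem_nhdsGT hzp') |>.exists
  set V := U \ closedBall p ρ
  have hVo : IsOpen V := hUo.sdiff isClosed_closedBall
  have hclV : closure V ⊆ closure U \ ball p ρ := fun x hx =>
    ⟨closure_mono sdiff_subset hx,
      closure_minimal (fun y hy hyb => hy.2 (ball_subset_closedBall hyb))
        isOpen_ball.isClosed_compl hx⟩
  have hclVp : closure V ⊆ closure U \ {p} := fun x hx =>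
    ⟨(hclV hx).1, fun hxp => (hclV hx).2 (hxp ▸ mem_ball_self hρ)⟩
  have hbc : ContinuousOn b (closure U \ {p}) :=
    continuousOn_const.mul (continuousOn_const.sub
      ((continuous_id.dist continuous_const).continuousOn.log fun x hx => dist_ne_zero.2 hx.2))
  have hVharm : HarmonicContOnCl (v - b) V :=
    ⟨fun x hx => (hv x hx.1).sub ((harmonicAt_const _).sub (harmonicAt_log_dist
      (hclVp (subset_closure hx)).2)).const_smul, (hc.sub hbc).mono hclVp⟩
  have hVb : IsBounded V :=
    (isBounded_closedBall.subset (subset_closure.trans hR)).subset sdiff_subset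
  have hfrV : ∀ x ∈ frontier V, (v - b) x ≤ 0 := by
    intro x hx
    rw [hVo.frontier_eq] at hx
    have hxp : x ≠ p := (hclVp hx.1).2
    rw [Pi.sub_apply, sub_nonpos]
    by_cases hxU : x ∈ U
    · have hxρ : dist x p = ρ :=
        le_antisymm (not_not.1 fun h => hx.2 ⟨hxU, h⟩) (not_lt.1 (hclV hx.1).2)
      simp only [b, hxρ]
      exact (hρ₀K (hxρ.trans_lt hρρ₀) hxU).trans hρK
    · have hxfr : x ∈ frontier U := by
        rw [hUo.frontier_eq]
        exact ⟨(hclV hx.1).1, hxU⟩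
      exact (hfr x hxfr hxp).trans (hb x hxfr.1 hxp)
  have hzV : z ∈ V := ⟨hz, not_le.2 hρz⟩
  simpa [sub_nonpos] using hVharm.le_of_forall_mem_frontier_le hVb hfrV hzV

theorem InnerProductSpace.HarmonicOnNhd.nonpos_of_forall_mem_frontier_nonpos_of_isBoundedUnder
    {v : ℂ → ℝ} {U : Set ℂ} {p : ℂ} (hv : HarmonicOnNhd v U) (hUo : IsOpen U) (hU : IsBounded U)
    (hpU : p ∉ U) (hc : ContinuousOn v (closure U \ {p}))
    (hfr : ∀ x ∈ frontier U, x ≠ p → v x ≤ 0) (hbdd : IsBoundedUnder (· ≤ ·) (𝓝[U] p) v)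
    {z : ℂ} (hz : z ∈ U) : v z ≤ 0 := by
  obtain ⟨K, hK⟩ := hbdd
  obtain ⟨R, hR⟩ := hU.closure.subset_closedBall p
  have hzp : z ≠ p := ne_of_mem_of_not_mem hz hpU
  have hlim : Tendsto (fun η : ℝ => η * (Real.log R - Real.log (dist z p))) (𝓝[>] 0) (𝓝 0) :=
    ((continuous_mul_const _).tendsto' 0 0 (zero_mul _)).mono_left nhdsWithin_le_nhds
  exact ge_of_tendsto hlim (eventually_nhdsWithin_of_forall fun η hη =>
    hv.le_mul_log_sub_log_dist hUo hc hfr hK hR hη hz hzp)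

theorem Complex.norm_sub_one_sq_of_norm_eq_one {ζ : ℂ} (hζ : ‖ζ‖ = 1) :
    ‖ζ - 1‖ ^ 2 = 2 * (1 - ζ.re) := by
  have h := Complex.sq_norm ζ
  rw [hζ, normSq_apply] at h
  rw [Complex.sq_norm, normSq_apply]
  simp only [sub_re, one_re, sub_im, one_im, sub_zero]
  linarith

theorem exists_nonneg_le_mul_one_sub_re_of_nonpos_near_one {u : ℂ → ℝ}
    (hc : ContinuousOn u (sphere (0 : ℂ) 1 \ {1})) {ε : ℝ} (hε : 0 < ε)
    (harc : ∀ ζ : ℂ, ‖ζ‖ = 1 → ζ ≠ 1 → ‖ζ - 1‖ < ε → u ζ ≤ 0) :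
    ∃ C ≥ 0, ∀ ζ : ℂ, ‖ζ‖ = 1 → ζ ≠ 1 → u ζ ≤ C * (1 - ζ.re) := by
  set A := sphere (0 : ℂ) 1 \ ball 1 ε
  have hA : A ⊆ sphere (0 : ℂ) 1 \ {1} := fun ζ hζ =>
    ⟨hζ.1, fun h => hζ.2 (mem_singleton_iff.1 h ▸ mem_ball_self hε)⟩
  obtain ⟨M, hM⟩ := ((isCompact_sphere 0 1).diff isOpen_ball).bddAbove_image (hc.mono hA)
  -- On the circle `C (1 - Re ζ) = M ‖ζ - 1‖² / ε²`, which is at least `M` off the arc.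
  refine ⟨2 * max M 0 / ε ^ 2, by positivity, fun ζ hζ hζ1 => ?_⟩
  have hre : 1 - ζ.re = ‖ζ - 1‖ ^ 2 / 2 := by
    rw [norm_sub_one_sq_of_norm_eq_one hζ]
    ring
  rcases lt_or_ge ‖ζ - 1‖ ε with hnear | hfar
  · exact (harc ζ hζ hζ1 hnear).trans (by rw [hre]; positivity)
  · have huM : u ζ ≤ max M 0 :=
      (hM ⟨ζ, ⟨by simpa using hζ, by simpa [dist_eq] using hfar⟩, rfl⟩).trans (le_max_left _ _)
    have hε2 : ε ^ 2 ≤ ‖ζ - 1‖ ^ 2 := pow_le_pow_left₀ hε.le hfar 2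
    calc u ζ ≤ max M 0 := huM
      _ ≤ max M 0 * (‖ζ - 1‖ ^ 2 / ε ^ 2) :=
        le_mul_of_one_le_right (le_max_right _ _) ((one_le_div (by positivity)).2 hε2)
      _ = 2 * max M 0 / ε ^ 2 * (1 - ζ.re) := by
        rw [hre]
        field_simp

theorem harmonicAt_mul_one_sub_re (C : ℝ) (z : ℂ) :
    HarmonicAt (fun x : ℂ => C * (1 - x.re)) z := by
  simpa using (analyticAt_const (v := (C : ℂ)).mul
    ((analyticAt_const (v := (1 : ℂ))).sub analyticAt_id)).harmonicAt_re

theorem InnerProductSpace.HarmonicOnNhd.le_mul_one_sub_re_of_isBoundedUnder {u : ℂ → ℝ}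
    (hu : HarmonicOnNhd u (ball 0 1)) (hc : ContinuousOn u (closedBall 0 1 \ {1})) {C : ℝ}
    (hC : 0 ≤ C) (hCle : ∀ ζ : ℂ, ‖ζ‖ = 1 → ζ ≠ 1 → u ζ ≤ C * (1 - ζ.re))
    (hbdd : IsBoundedUnder (· ≤ ·) (𝓝[ball 0 1] 1) u) {z : ℂ} (hz : z ∈ ball (0 : ℂ) 1) :
    u z ≤ C * (1 - z.re) := by
  set h : ℂ → ℝ := fun x => C * (1 - x.re)
  have hvc : ContinuousOn (u - h) (closure (ball 0 1) \ {1}) := by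
    rw [closure_ball 0 one_ne_zero]
    exact hc.sub (by fun_prop)
  have hvfr : ∀ x ∈ frontier (ball (0 : ℂ) 1), x ≠ 1 → (u - h) x ≤ 0 := fun x hx hx1 =>
    sub_nonpos.2 (hCle x (by simpa [frontier_ball] using hx) hx1)
  have hvbdd : IsBoundedUnder (· ≤ ·) (𝓝[ball 0 1] 1) (u - h) := by
    refine hbdd.mono_le (eventually_nhdsWithin_of_forall fun x hx => ?_)
    have hre : 0 ≤ 1 - x.re := sub_nonneg.2 ((re_le_norm x).trans (mem_ball_zero_iff.1 hx).le)
    exact sub_le_self _ (mul_nonneg hC hre)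
  exact sub_nonpos.1 <| (hu.sub fun x _ => harmonicAt_mul_one_sub_re C x)
    |>.nonpos_of_forall_mem_frontier_nonpos_of_isBoundedUnder isOpen_ball isBounded_ball
      (by simp) hvc hvfr hvbdd hz

theorem bounded_positive_harmonic_vanishing_arc_tendsto_zero
    (u : ℂ → ℝ)
    (hharm : HarmonicOnSet u (ball (0 : ℂ) 1))
    (hpos : ∀ t ∈ ball (0 : ℂ) 1, 0 < u t)
    (hcont : ContinuousOn u (closedBall (0 : ℂ) 1 \ {1}))
    (harc : ∃ ε > 0, ∀ ζ : ℂ, ‖ζ‖ = 1 → ζ ≠ 1 →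
      ‖ζ - 1‖ < ε → u ζ = 0)
    (hbdd : ∃ K : ℝ, ∃ δ > 0, ∀ t ∈ ball (0 : ℂ) 1,
      ‖t - 1‖ < δ → u t ≤ K) :
    Tendsto u (nhdsWithin 1 (ball (0 : ℂ) 1)) (nhds 0) := by
  obtain ⟨ε, hε, harc⟩ := harc
  obtain ⟨K, δ, hδ, hK⟩ := hbdd
  obtain ⟨C, hC, hCle⟩ := exists_nonneg_le_mul_one_sub_re_of_nonpos_near_one
    (hcont.mono (sdiff_subset_sdiff_left sphere_subset_closedBall)) hε
    fun ζ h1 h2 h3 => (harc ζ h1 h2 h3).le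
  have hbdd : IsBoundedUnder (· ≤ ·) (𝓝[ball 0 1] 1) u := ⟨K, eventually_map.2 <| by
    filter_upwards [inter_mem_nhdsWithin _ (ball_mem_nhds 1 hδ)] with x ⟨hx, hxδ⟩
    exact hK x hx (mem_ball_iff_norm.1 hxδ)⟩
  have hle : ∀ z ∈ ball (0 : ℂ) 1, u z ≤ C * (1 - z.re) := fun z hz =>
    (hharm.harmonicOnNhd isOpen_ball).le_mul_one_sub_re_of_isBoundedUnder hcont hC hCle hbdd hz
  have hlim : Tendsto (fun z : ℂ => C * (1 - z.re)) (𝓝[ball 0 1] 1) (𝓝 0) := by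
    simpa using ((by fun_prop : Continuous fun z : ℂ => C * (1 - z.re)).tendsto 1).mono_left
      nhdsWithin_le_nhds
  exact tendsto_of_tendsto_of_tendsto_of_le_of_le' tendsto_const_nhds hlim
    (eventually_nhdsWithin_of_forall fun x hx => (hpos x hx).le)
    (eventually_nhdsWithin_of_forall hle)
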